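/- Let θ: [t_s, T] → ℝ^p be continuously differentiable with θ'(t) = −η·E_x[J(x)ᵀ ℓ'(x,t)] where J(x) ∈ ℝ^{o×p} is time-independent and ℓ'(x,t) ∈ ℝ^o. Then for any test Jacobian J_z ∈ ℝ^{o×p}, ‖J_z(θ(T) − θ(t_s))‖ ≤ E_x[‖J_z J(x)ᵀ‖_nuc] · sup_{x,t} ‖η(T−t_s)ℓ'(x,t)‖, where ‖·‖_nuc denotes the nuclear norm (sum of singular values). -/

import Mathlib

open scoped BigOperators Matrix

/-- Euclidean norm of a finite real vector. -/
noncomputable def vecNorm {m : ℕ} (v : Fin m → ℝ) : ℝ := Real.sqrt (∑ i, v i ^ 2)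

/-- |M|: the positive-semidefinite square root of MᵀM. -/
noncomputable def matAbs {o : ℕ} (M : Matrix (Fin o) (Fin o) ℝ) :
    Matrix (Fin o) (Fin o) ℝ :=
  ((Matrix.posSemidef_conjTranspose_mul_self M).1.eigenvectorUnitary : Matrix (Fin o) (Fin o) ℝ) *
    Matrix.diagonal ((↑) ∘ (fun x : ℝ => Real.sqrt x) ∘
      (Matrix.posSemidef_conjTranspose_mul_self M).1.eigenvalues) *
    (star ((Matrix.posSemidef_conjTranspose_mul_self M).1.eigenvectorUnitary :
      Matrix (Fin o) (Fin o) ℝ))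

/-- Nuclear norm: Tr(|M|) (sum of singular values). -/
noncomputable def nucNorm {o : ℕ} (M : Matrix (Fin o) (Fin o) ℝ) : ℝ :=
  Matrix.trace (matAbs M)

/-- Expectation over a finite (uniform / empirical) probability space. -/
noncomputable def expect {X : Type*} [Fintype X] (f : X → ℝ) : ℝ :=
  (∑ x, f x) / (Fintype.card X : ℝ)

/-! ### Auxiliary lemmas -/

lemma enorm_eq_norm {m : ℕ} (v : Fin m → ℝ) :
    vecNorm v = ‖(EuclideanSpace.equiv (Fin m) ℝ).symm v‖ := by
  rw [EuclideanSpace.norm_eq]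
  simp [vecNorm, Real.norm_eq_abs, sq_abs]

lemma enorm_nonneg' {m : ℕ} (v : Fin m → ℝ) : 0 ≤ vecNorm v := Real.sqrt_nonneg _

lemma enorm_smul' {m : ℕ} (c : ℝ) (v : Fin m → ℝ) : vecNorm (c • v) = |c| * vecNorm v := by
  rw [enorm_eq_norm, enorm_eq_norm, map_smul, norm_smul, Real.norm_eq_abs]

lemma psd_entry_sq_le {o : ℕ} {S : Matrix (Fin o) (Fin o) ℝ} (hS : S.PosSemidef) (i j : Fin o) :
    S i j ^ 2 ≤ S i i * S j j := by
  have hsym : S j i = S i j := by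
    have := hS.isHermitian
    have h2 := congrFun (congrFun this.symm i) j
    simpa [Matrix.conjTranspose_apply] using h2.symm
  have hq : ∀ t : ℝ, 0 ≤ S i i * (t * t) + (2 * S i j) * t + S j j := by
    intro t
    have h := hS.dotProduct_mulVec_nonneg (t • (Pi.single i 1 : Fin o → ℝ) + (Pi.single j 1 : Fin o → ℝ))
    simp only [star_trivial, Matrix.mulVec_add, Matrix.mulVec_smul, Matrix.mulVec_single,
      dotProduct_add, add_dotProduct, smul_dotProduct,
      dotProduct_smul, single_dotProduct, smul_eq_mul, mul_one, one_mul,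
      hsym, Matrix.col_apply, MulOpposite.op_one, one_smul] at h
    ring_nf at h ⊢
    linarith [h]
  have hd := discrim_le_zero hq
  unfold discrim at hd
  nlinarith [hd]

lemma psd_diag_nonneg {o : ℕ} {S : Matrix (Fin o) (Fin o) ℝ} (hS : S.PosSemidef) (i : Fin o) :
    0 ≤ S i i := by
  have h := hS.dotProduct_mulVec_nonneg (Pi.single i 1 : Fin o → ℝ)
  simpa [Matrix.mulVec_single, single_dotProduct] using h

lemma matAbs_posSemidef {o : ℕ} (M : Matrix (Fin o) (Fin o) ℝ) : (matAbs M).PosSemidef :=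
  by
  unfold matAbs
  have hD : (Matrix.diagonal ((↑) ∘ (fun x : ℝ => Real.sqrt x) ∘
      (Matrix.posSemidef_conjTranspose_mul_self M).1.eigenvalues) :
        Matrix (Fin o) (Fin o) ℝ).PosSemidef :=
    Matrix.posSemidef_diagonal_iff.mpr (fun i => by simp [Real.sqrt_nonneg])
  simpa [Matrix.star_eq_conjTranspose] using hD.mul_mul_conjTranspose_same
    ((Matrix.posSemidef_conjTranspose_mul_self M).1.eigenvectorUnitary : Matrix (Fin o) (Fin o) ℝ)

lemma nucNorm_nonneg {o : ℕ} (M : Matrix (Fin o) (Fin o) ℝ) : 0 ≤ nucNorm M := by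
  unfold nucNorm Matrix.trace
  exact Finset.sum_nonneg fun i _ => psd_diag_nonneg (matAbs_posSemidef M) i

lemma enorm_mulVec_le {o : ℕ} (M : Matrix (Fin o) (Fin o) ℝ) (v : Fin o → ℝ) :
    vecNorm (M.mulVec v) ≤ nucNorm M * vecNorm v := by
  set S := matAbs M with hSdef
  have hS : S.PosSemidef := matAbs_posSemidef M
  have hSS : S * S = Mᵀ * M := by
    rw [← Matrix.conjTranspose_eq_transpose_of_trivial M]
    have hP := Matrix.posSemidef_conjTranspose_mul_self M
    have hU : (star (hP.1.eigenvectorUnitary : Matrix (Fin o) (Fin o) ℝ)) *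
        (hP.1.eigenvectorUnitary : Matrix (Fin o) (Fin o) ℝ) = 1 :=
      Matrix.mem_unitaryGroup_iff'.mp hP.1.eigenvectorUnitary.2
    have hDD : Matrix.diagonal ((↑) ∘ (fun x : ℝ => Real.sqrt x) ∘ hP.1.eigenvalues) *
        Matrix.diagonal ((↑) ∘ (fun x : ℝ => Real.sqrt x) ∘ hP.1.eigenvalues) =
        (Matrix.diagonal (RCLike.ofReal ∘ hP.1.eigenvalues) : Matrix (Fin o) (Fin o) ℝ) := by
      rw [Matrix.diagonal_mul_diagonal]
      congr 1
      funext i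
      simp
      exact Real.mul_self_sqrt (hP.eigenvalues_nonneg i)
    rw [hSdef]
    unfold matAbs
    conv_rhs => rw [hP.1.spectral_theorem, Unitary.conjStarAlgAut_apply]
    calc _ = (hP.1.eigenvectorUnitary : Matrix (Fin o) (Fin o) ℝ) *
          (Matrix.diagonal ((↑) ∘ (fun x : ℝ => Real.sqrt x) ∘ hP.1.eigenvalues) *
          ((star (hP.1.eigenvectorUnitary : Matrix (Fin o) (Fin o) ℝ)) *
          (hP.1.eigenvectorUnitary : Matrix (Fin o) (Fin o) ℝ)) *
          Matrix.diagonal ((↑) ∘ (fun x : ℝ => Real.sqrt x) ∘ hP.1.eigenvalues)) *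
          (star (hP.1.eigenvectorUnitary : Matrix (Fin o) (Fin o) ℝ)) := by
            simp only [Matrix.mul_assoc]
      _ = _ := by rw [hU, Matrix.mul_one, hDD]
  have hsym : Sᵀ = S := by
    have := hS.isHermitian
    rwa [Matrix.IsHermitian, Matrix.conjTranspose_eq_transpose_of_trivial] at this
  have key : ∑ i, (M.mulVec v i) ^ 2 = ∑ i, (S.mulVec v i) ^ 2 := by
    have hM : ∑ i, (M.mulVec v i) ^ 2 = v ⬝ᵥ ((Mᵀ * M).mulVec v) := by
      rw [← Matrix.mulVec_mulVec, Matrix.dotProduct_mulVec, ← Matrix.vecMul_transpose]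
      simp [dotProduct, sq]
    have hS2 : ∑ i, (S.mulVec v i) ^ 2 = v ⬝ᵥ ((S * S).mulVec v) := by
      nth_rewrite 2 [← hsym]
      rw [← Matrix.mulVec_mulVec, Matrix.dotProduct_mulVec, ← Matrix.vecMul_transpose, hsym]
      simp [dotProduct, sq]
    rw [hM, hS2, hSS]
  have htr : 0 ≤ Matrix.trace S := nucNorm_nonneg M
  have hbound : ∑ i, (S.mulVec v i) ^ 2 ≤ (Matrix.trace S) ^ 2 * ∑ j, v j ^ 2 := by
    have step1 : ∀ i : Fin o, (S.mulVec v i) ^ 2 ≤ (∑ j, S i j ^ 2) * ∑ j, v j ^ 2 := by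
      intro i
      simpa [Matrix.mulVec, dotProduct] using
        Finset.sum_mul_sq_le_sq_mul_sq Finset.univ (fun j => S i j) v
    calc ∑ i, (S.mulVec v i) ^ 2 ≤ ∑ i, ((∑ j, S i j ^ 2) * ∑ j, v j ^ 2) :=
          Finset.sum_le_sum fun i _ => step1 i
      _ = (∑ i, ∑ j, S i j ^ 2) * ∑ j, v j ^ 2 := by rw [Finset.sum_mul]
      _ ≤ (∑ i, ∑ j, S i i * S j j) * ∑ j, v j ^ 2 := by
          apply mul_le_mul_of_nonneg_right _ (Finset.sum_nonneg fun j _ => sq_nonneg _)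
          exact Finset.sum_le_sum fun i _ => Finset.sum_le_sum fun j _ => psd_entry_sq_le hS i j
      _ = (Matrix.trace S) ^ 2 * ∑ j, v j ^ 2 := by
          rw [← Finset.sum_mul_sum]
          simp [Matrix.trace, Matrix.diag, sq]
  rw [show nucNorm M = Matrix.trace S from rfl]
  unfold vecNorm
  rw [key]
  calc Real.sqrt (∑ i, (S.mulVec v i) ^ 2) ≤
        Real.sqrt ((Matrix.trace S) ^ 2 * ∑ j, v j ^ 2) := Real.sqrt_le_sqrt hbound
    _ = Matrix.trace S * Real.sqrt (∑ j, v j ^ 2) := by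
        rw [Real.sqrt_mul (sq_nonneg _), Real.sqrt_sq htr]

/-- The map `v ↦ Jz.mulVec v` as a continuous linear map into Euclidean space. -/
noncomputable def L' {o p : ℕ} (Jz : Matrix (Fin o) (Fin p) ℝ) :
    (Fin p → ℝ) →L[ℝ] EuclideanSpace ℝ (Fin o) :=
  ((EuclideanSpace.equiv (Fin o) ℝ).symm.toContinuousLinearMap).comp
    (LinearMap.toContinuousLinearMap (Matrix.mulVecLin Jz))

lemma L'_apply {o p : ℕ} (Jz : Matrix (Fin o) (Fin p) ℝ) (v : Fin p → ℝ) :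
    L' Jz v = (EuclideanSpace.equiv (Fin o) ℝ).symm (Jz.mulVec v) := by
  simp [L']

lemma norm_L' {o p : ℕ} (Jz : Matrix (Fin o) (Fin p) ℝ) (v : Fin p → ℝ) :
    ‖L' Jz v‖ = vecNorm (Jz.mulVec v) := by
  rw [L'_apply, enorm_eq_norm]

/-- Lemma A.2, lazy case: if the parameters follow linearized gradient
flow θ'(t) = −η·E_x[J(x)ᵀ ℓ'(x,t)] with time-independent Jacobians, then
‖J_z(θ(T) − θ(t_s))‖ ≤ E_x[‖J_z J(x)ᵀ‖_nuc] · sup_{x,t} ‖η(T−t_s)ℓ'(x,t)‖. -/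
theorem lazy_param_displacement_bound {X : Type*} [Fintype X] [Nonempty X]
    {o p : ℕ} (ts T η B : ℝ) (hts : ts ≤ T)
    (θ : ℝ → (Fin p → ℝ))
    (J : X → Matrix (Fin o) (Fin p) ℝ) (Jz : Matrix (Fin o) (Fin p) ℝ)
    (ℓ' : X → ℝ → (Fin o → ℝ))
    (hdyn : ∀ t ∈ Set.Icc ts T,
      HasDerivAt θ
        (-((Fintype.card X : ℝ)⁻¹ • ∑ x, η • (J x)ᵀ.mulVec (ℓ' x t))) t)
    (hcont : ∀ x, ContinuousOn (ℓ' x) (Set.Icc ts T))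
    (hB : ∀ x, ∀ t ∈ Set.Icc ts T, vecNorm ((η * (T - ts)) • ℓ' x t) ≤ B) :
    vecNorm (Jz.mulVec (θ T - θ ts)) ≤
      expect (fun x => nucNorm (Jz * (J x)ᵀ)) * B := by
  have hBnn : 0 ≤ B :=
    le_trans (enorm_nonneg' _) (hB (Classical.arbitrary X) ts ⟨le_refl _, hts⟩)
  have hNpos : (0 : ℝ) < (Fintype.card X : ℝ) := by
    exact_mod_cast Fintype.card_pos
  have hexp_nn : 0 ≤ expect (fun x => nucNorm (Jz * (J x)ᵀ)) := by
    apply div_nonneg _ hNpos.le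
    exact Finset.sum_nonneg fun x _ => nucNorm_nonneg _
  rcases eq_or_lt_of_le hts with heq | hlt
  · subst heq
    simp only [sub_self, Matrix.mulVec_zero]
    have : vecNorm (0 : Fin o → ℝ) = 0 := by simp [vecNorm]
    rw [this]
    exact mul_nonneg hexp_nn hBnn
  · set C : ℝ := expect (fun x => nucNorm (Jz * (J x)ᵀ)) * B / (T - ts) with hC
    have hTts : (0 : ℝ) < T - ts := sub_pos.mpr hlt
    set g : ℝ → EuclideanSpace ℝ (Fin o) := fun t => L' Jz (θ t) with hg
    have hderiv : ∀ t ∈ Set.Icc ts T,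
        HasDerivWithinAt g
          (L' Jz (-((Fintype.card X : ℝ)⁻¹ • ∑ x, η • (J x)ᵀ.mulVec (ℓ' x t))))
          (Set.Icc ts T) t := fun t ht =>
      ((L' Jz).hasFDerivAt.comp_hasDerivAt t (hdyn t ht)).hasDerivWithinAt
    have hbound : ∀ t ∈ Set.Icc ts T,
        ‖L' Jz (-((Fintype.card X : ℝ)⁻¹ • ∑ x, η • (J x)ᵀ.mulVec (ℓ' x t)))‖ ≤ C := by
      intro t ht
      have hterm : ∀ x : X, ‖L' Jz (η • (J x)ᵀ.mulVec (ℓ' x t))‖ ≤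
          nucNorm (Jz * (J x)ᵀ) * (B / (T - ts)) := by
        intro x
        have h1 : ‖L' Jz (η • (J x)ᵀ.mulVec (ℓ' x t))‖
            = |η| * vecNorm ((Jz * (J x)ᵀ).mulVec (ℓ' x t)) := by
          rw [map_smul, norm_smul, Real.norm_eq_abs, norm_L', Matrix.mulVec_mulVec]
        have h2 : vecNorm ((Jz * (J x)ᵀ).mulVec (ℓ' x t)) ≤
            nucNorm (Jz * (J x)ᵀ) * vecNorm (ℓ' x t) := enorm_mulVec_le _ _
        have h3 : |η| * vecNorm (ℓ' x t) ≤ B / (T - ts) := by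
          have hb := hB x t ht
          rw [enorm_smul', abs_mul, abs_of_pos hTts] at hb
          rw [le_div_iff₀ hTts]
          nlinarith [hb]
        calc ‖L' Jz (η • (J x)ᵀ.mulVec (ℓ' x t))‖
            = |η| * vecNorm ((Jz * (J x)ᵀ).mulVec (ℓ' x t)) := h1
          _ ≤ |η| * (nucNorm (Jz * (J x)ᵀ) * vecNorm (ℓ' x t)) :=
              mul_le_mul_of_nonneg_left h2 (abs_nonneg _)
          _ = nucNorm (Jz * (J x)ᵀ) * (|η| * vecNorm (ℓ' x t)) := by ring
          _ ≤ nucNorm (Jz * (J x)ᵀ) * (B / (T - ts)) :=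
              mul_le_mul_of_nonneg_left h3 (nucNorm_nonneg _)
      calc ‖L' Jz (-((Fintype.card X : ℝ)⁻¹ • ∑ x, η • (J x)ᵀ.mulVec (ℓ' x t)))‖
          = (Fintype.card X : ℝ)⁻¹ * ‖∑ x, L' Jz (η • (J x)ᵀ.mulVec (ℓ' x t))‖ := by
            rw [map_neg, norm_neg, map_smul, norm_smul, map_sum]
            simp [abs_of_pos hNpos]
        _ ≤ (Fintype.card X : ℝ)⁻¹ * ∑ x, ‖L' Jz (η • (J x)ᵀ.mulVec (ℓ' x t))‖ := by
            apply mul_le_mul_of_nonneg_left (norm_sum_le _ _) (by positivity)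
        _ ≤ (Fintype.card X : ℝ)⁻¹ * ∑ x, nucNorm (Jz * (J x)ᵀ) * (B / (T - ts)) := by
            apply mul_le_mul_of_nonneg_left (Finset.sum_le_sum fun x _ => hterm x) (by positivity)
        _ = C := by
            rw [hC]
            unfold expect
            rw [← Finset.sum_mul]
            field_simp
    have hmvt := (convex_Icc ts T).norm_image_sub_le_of_norm_hasDerivWithin_le
      hderiv hbound (Set.left_mem_Icc.mpr hts) (Set.right_mem_Icc.mpr hts)
    have hgdiff : g T - g ts = L' Jz (θ T - θ ts) := by rw [map_sub]
    have hnorm : ‖g T - g ts‖ = vecNorm (Jz.mulVec (θ T - θ ts)) := by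
      rw [hgdiff, norm_L']
    rw [hnorm] at hmvt
    have : C * ‖T - ts‖ = expect (fun x => nucNorm (Jz * (J x)ᵀ)) * B := by
      rw [Real.norm_eq_abs, abs_of_pos hTts, hC]
      field_simp
    linarith [hmvt, this.symm.le, this.le]
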